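/- arXiv:2510.25492 — 5 statements merged into one kernel-verified Lean document; each statement's English description precedes it below -/
import Mathlib

section
/- Let p(x) ∈ ℤ[x] be an irreducible monic polynomial of degree 3 and let θ ∈ ℂ satisfy p(θ) = 0. If an integer z ∈ ℤ satisfies q^2(z − θ) ∈ □₂(θ) for some natural number q, then p(z) is a sum of two integer squares. -/
set_option maxRecDepth 100000
set_option maxHeartbeats 2000000

open Polynomial

/-- Sum-of-two-squares descent for naturals. -/
lemma nat_descent (m n : ℕ) (hm : m ≠ 0) (hx : ∃ x y : ℕ, m ^ 2 * n = x ^ 2 + y ^ 2) :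
    ∃ x y : ℕ, n = x ^ 2 + y ^ 2 := by
  rcases Nat.eq_zero_or_pos n with rfl | hn
  · exact ⟨0, 0, rfl⟩
  rw [Nat.eq_sq_add_sq_iff] at hx ⊢
  intro p hp hp3
  have hpp : p.Prime := Nat.prime_of_mem_primeFactors hp
  have h := hx p (Nat.mem_primeFactors.mpr ⟨hpp, Dvd.dvd.mul_left (Nat.dvd_of_mem_primeFactors hp) _,
    mul_ne_zero (pow_ne_zero 2 hm) hn.ne'⟩) hp3
  haveI : Fact p.Prime := ⟨hpp⟩
  rw [padicValNat.mul (pow_ne_zero 2 hm) hn.ne', padicValNat.pow m 2] at h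
  exact (Nat.even_add.mp h).mp (even_two_mul _)

/-- Sum-of-two-squares descent for integers. -/
lemma int_descent (m n A B : ℤ) (hm : m ≠ 0) (h : m ^ 2 * n = A ^ 2 + B ^ 2) :
    ∃ x y : ℤ, n = x ^ 2 + y ^ 2 := by
  have hm2 : 0 < m ^ 2 := by positivity
  have hn : 0 ≤ n := by
    have h0 : m ^ 2 * 0 ≤ m ^ 2 * n := by
      rw [mul_zero, h]; positivity
    exact le_of_mul_le_mul_left h0 hm2
  have hnat : m.natAbs ^ 2 * n.toNat = A.natAbs ^ 2 + B.natAbs ^ 2 := by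
    have : (↑(m.natAbs ^ 2 * n.toNat) : ℤ) = ↑(A.natAbs ^ 2 + B.natAbs ^ 2) := by
      push_cast [Int.natAbs_sq, Int.toNat_of_nonneg hn, sq_abs]
      simpa [Int.natAbs_pow] using h
    exact_mod_cast this
  obtain ⟨x, y, hxy⟩ := nat_descent m.natAbs n.toNat (Int.natAbs_ne_zero.mpr hm) ⟨_, _, hnat⟩
  exact ⟨x, y, by rw [← Int.toNat_of_nonneg hn, hxy]; push_cast; ring⟩

theorem ring_transfer_principle_sum_two_squares
    (P : ℤ[X]) (hmonic : P.Monic) (hirr : Irreducible P) (hdeg : P.natDegree = 3)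
    (θ : ℂ) (hroot : aeval θ P = 0) (z : ℤ) (q : ℕ) (hq : 0 < q)
    (h : ∃ u₀ u₁ u₂ v₀ v₁ v₂ : ℤ,
      (q : ℂ) ^ 2 * ((z : ℂ) - θ) =
        ((u₀ : ℂ) + (u₁ : ℂ) * θ + (u₂ : ℂ) * θ ^ 2) ^ 2 +
        ((v₀ : ℂ) + (v₁ : ℂ) * θ + (v₂ : ℂ) * θ ^ 2) ^ 2) :
    ∃ w₁ w₂ : ℤ, P.eval z = w₁ ^ 2 + w₂ ^ 2 := by
  obtain ⟨u₀, u₁, u₂, v₀, v₁, v₂, hW⟩ := h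
  set a : ℤ := P.coeff 2 with ha
  set b : ℤ := P.coeff 1 with hb
  set c : ℤ := P.coeff 0 with hc
  -- P is an explicit monic cubic
  have hP : P = X ^ 3 + C a * X ^ 2 + C b * X + C c := by
    have h3 : P.coeff 3 = 1 := by
      have := hmonic.leadingCoeff
      rwa [Polynomial.leadingCoeff, hdeg] at this
    ext n
    rcases lt_or_ge n 4 with hn | hn
    · interval_cases n <;>
        simp [coeff_X_pow, coeff_C, h3, ha, hb, hc, -eq_intCast]
    · have h1 : P.coeff n = 0 := P.coeff_eq_zero_of_natDegree_lt (by omega)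
      have h2 : n ≠ 3 := by omega
      simp only [coeff_add, coeff_X_pow, coeff_C, coeff_X, coeff_C_mul, h1, h2, -eq_intCast]
      rw [if_neg (not_false : ¬False), if_neg (by omega : ¬ n = 2),
        if_neg (by omega : ¬ 1 = n), if_neg (by omega : ¬ n = 0)]
      ring
  -- the cubic relation satisfied by θ
  have hθ : θ ^ 3 + (a : ℂ) * θ ^ 2 + (b : ℂ) * θ + (c : ℂ) = 0 := by
    have := hroot
    rw [hP] at this
    simpa [map_add, map_mul, map_pow, aeval_X, aeval_C] using this
  -- the minimal polynomial of θ over ℚ is P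
  have hPQmonic : (P.map (algebraMap ℤ ℚ)).Monic := hmonic.map _
  have hPQirr : Irreducible (P.map (algebraMap ℤ ℚ)) :=
    (Polynomial.IsPrimitive.Int.irreducible_iff_irreducible_map_cast hmonic.isPrimitive).mp hirr
  have hPQroot : Polynomial.aeval θ (P.map (algebraMap ℤ ℚ)) = 0 := by
    rwa [aeval_map_algebraMap]
  have hmin : minpoly ℚ θ = P.map (algebraMap ℤ ℚ) :=
    (minpoly.eq_of_irreducible_of_monic hPQirr hPQroot hPQmonic).symm
  have hmindeg : (minpoly ℚ θ).natDegree = 3 := by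
    rw [hmin, hmonic.natDegree_map, hdeg]
  -- linear independence of 1, θ, θ² over ℤ
  have indep : ∀ c₀ c₁ c₂ : ℤ, (c₀ : ℂ) + (c₁ : ℂ) * θ + (c₂ : ℂ) * θ ^ 2 = 0 →
      c₀ = 0 ∧ c₁ = 0 ∧ c₂ = 0 := by
    intro c₀ c₁ c₂ hcc
    set g₀ : ℤ[X] := C c₀ + C c₁ * X + C c₂ * X ^ 2 with hg0
    have hgeval : Polynomial.aeval θ g₀ = 0 := by
      simp only [hg0, map_add, map_mul, map_pow, aeval_X, aeval_C, algebraMap_int_eq,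
        eq_intCast, map_intCast]
      linear_combination hcc
    have hgz : g₀ = 0 := by
      by_contra hne
      have hmapne : g₀.map (algebraMap ℤ ℚ) ≠ 0 := by
        intro hcon
        exact hne (Polynomial.map_injective _
          ((algebraMap ℤ ℚ).injective_int) (by simpa using hcon))
      have hmapeval : Polynomial.aeval θ (g₀.map (algebraMap ℤ ℚ)) = 0 := by
        rwa [aeval_map_algebraMap]
      have hdvd : minpoly ℚ θ ∣ g₀.map (algebraMap ℤ ℚ) := minpoly.dvd ℚ θ hmapeval
      have hle : (minpoly ℚ θ).natDegree ≤ (g₀.map (algebraMap ℤ ℚ)).natDegree :=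
        Polynomial.natDegree_le_of_dvd hdvd hmapne
      have hdg : (g₀.map (algebraMap ℤ ℚ)).natDegree ≤ 2 := by
        refine le_trans Polynomial.natDegree_map_le ?_
        rw [hg0]
        compute_degree
      omega
    have e0 : c₀ = 0 := by
      have := congrArg (fun p => Polynomial.coeff p 0) hgz
      simpa [hg0, coeff_add, coeff_C, coeff_X, coeff_X_pow, -eq_intCast] using this
    have e1 : c₁ = 0 := by
      have := congrArg (fun p => Polynomial.coeff p 1) hgz
      simpa [hg0, coeff_add, coeff_C, coeff_X, coeff_X_pow, -eq_intCast] using this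
    have e2 : c₂ = 0 := by
      have := congrArg (fun p => Polynomial.coeff p 2) hgz
      simpa [hg0, coeff_add, coeff_C, coeff_X, coeff_X_pow, -eq_intCast] using this
    exact ⟨e0, e1, e2⟩
  set Q : ℤ := (q : ℤ) with hQ
  -- extract the three coefficient equations
  obtain ⟨e0, e1, e2⟩ := indep
    ((v₀^2 + u₀^2 + -2*c*v₁*v₂ + -2*c*u₁*u₂ + a*c*v₂^2 + a*c*u₂^2) - Q ^ 2 * z)
    ((2*v₀*v₁ + 2*u₀*u₁ + -1*c*v₂^2 + -1*c*u₂^2 + -2*b*v₁*v₂ + -2*b*u₁*u₂ + a*b*v₂^2 + a*b*u₂^2) + Q ^ 2)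
    (v₁^2 + 2*v₀*v₂ + u₁^2 + 2*u₀*u₂ + -1*b*v₂^2 + -1*b*u₂^2 + -2*a*v₁*v₂ + -2*a*u₁*u₂ + a^2*v₂^2 + a^2*u₂^2)
    (by
      push_cast
      linear_combination (-1 : ℂ) * hW -
        ((2*((u₁:ℂ)*u₂+ (v₁:ℂ)*v₂) + ((u₂:ℂ)^2+(v₂:ℂ)^2) * θ - ((u₂:ℂ)^2+(v₂:ℂ)^2) * (a:ℂ))) * hθ)
  have e0' : Q ^ 2 * z = (v₀^2 + u₀^2 + -2*c*v₁*v₂ + -2*c*u₁*u₂ + a*c*v₂^2 + a*c*u₂^2) := by linear_combination -e0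
  have e1' : -Q ^ 2 = (2*v₀*v₁ + 2*u₀*u₁ + -1*c*v₂^2 + -1*c*u₂^2 + -2*b*v₁*v₂ + -2*b*u₁*u₂ + a*b*v₂^2 + a*b*u₂^2) := by linear_combination -e1
  have e2' : (0 : ℤ) = (v₁^2 + 2*v₀*v₂ + u₁^2 + 2*u₀*u₂ + -1*b*v₂^2 + -1*b*u₂^2 + -2*a*v₁*v₂ + -2*a*u₁*u₂ + a^2*v₂^2 + a^2*u₂^2) := by linear_combination -e2
  -- the norm identity
  have key : Q ^ 6 * (z ^ 3 + a * z ^ 2 + b * z + c) =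
      (-3*u₀*v₀^2 + u₀^3 + -3*c*u₂*v₀*v₁ + 3*c*u₁*v₁^2 + -3*c*u₁*v₀*v₂ + -1*c*u₁^3 + -3*c*u₀*v₁*v₂ + 3*c*u₀*u₁*u₂ + -3*c^2*u₂*v₂^2 + c^2*u₂^3 + 2*b*u₂*v₀^2 + -2*b*u₁*v₀*v₁ + -1*b*u₀*v₁^2 + 4*b*u₀*v₀*v₂ + b*u₀*u₁^2 + -2*b*u₀^2*u₂ + 2*b*c*u₂*v₁*v₂ + b*c*u₁*v₂^2 + -1*b*c*u₁*u₂^2 + -2*b^2*u₂*v₀*v₂ + -1*b^2*u₀*v₂^2 + b^2*u₀*u₂^2 + a*u₁*v₀^2 + 2*a*u₀*v₀*v₁ + -1*a*u₀^2*u₁ + -1*a*c*u₂*v₁^2 + 4*a*c*u₂*v₀*v₂ + -2*a*c*u₁*v₁*v₂ + a*c*u₁^2*u₂ + 2*a*c*u₀*v₂^2 + -2*a*c*u₀*u₂^2 + a*b*u₂*v₀*v₁ + a*b*u₁*v₀*v₂ + a*b*u₀*v₁*v₂ + -1*a*b*u₀*u₁*u₂ + -1*a^2*u₂*v₀^2 +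 -2*a^2*u₀*v₀*v₂ + a^2*u₀^2*u₂) ^ 2 + (-1*v₀^3 + 3*u₀^2*v₀ + c*v₁^3 + -3*c*v₀*v₁*v₂ + 3*c*u₁*u₂*v₀ + -3*c*u₁^2*v₁ + 3*c*u₀*u₂*v₁ + 3*c*u₀*u₁*v₂ + -1*c^2*v₂^3 + 3*c^2*u₂^2*v₂ + -1*b*v₀*v₁^2 + 2*b*v₀^2*v₂ + b*u₁^2*v₀ + -4*b*u₀*u₂*v₀ + 2*b*u₀*u₁*v₁ + -2*b*u₀^2*v₂ + b*c*v₁*v₂^2 + -1*b*c*u₂^2*v₁ + -2*b*c*u₁*u₂*v₂ + -1*b^2*v₀*v₂^2 + b^2*u₂^2*v₀ + 2*b^2*u₀*u₂*v₂ + a*v₀^2*v₁ + -2*a*u₀*u₁*v₀ + -1*a*u₀^2*v₁ + -1*a*c*v₁^2*v₂ + 2*a*c*v₀*v₂^2 + -2*a*c*u₂^2*v₀ + 2*a*c*u₁*u₂*v₁ + a*c*u₁^2*v₂ + -4*a*c*u₀*u₂*v₂ + a*b*v₀*v₁*v₂ + -1*a*b*u₁*u₂*v₀ + -1*a*b*u₀*u₂*v₁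 + -1*a*b*u₀*u₁*v₂ + -1*a^2*v₀^2*v₂ + 2*a^2*u₀*u₂*v₀ + a^2*u₀^2*v₂) ^ 2 := by
    linear_combination (z^2*Q^4 + v₀^2*z*Q^2 + v₀^4 + u₀^2*z*Q^2 + 2*u₀^2*v₀^2 + u₀^4 + -2*c*v₁*v₂*z*Q^2 + -4*c*v₀^2*v₁*v₂ + -2*c*u₁*u₂*z*Q^2 + -4*c*u₁*u₂*v₀^2 + -4*c*u₀^2*v₁*v₂ + -4*c*u₀^2*u₁*u₂ + 4*c^2*v₁^2*v₂^2 + 8*c^2*u₁*u₂*v₁*v₂ + 4*c^2*u₁^2*u₂^2 + b*Q^4 + a*z*Q^4 + a*v₀^2*Q^2 + a*u₀^2*Q^2 + a*c*v₂^2*z*Q^2 + -2*a*c*v₁*v₂*Q^2 + 2*a*c*v₀^2*v₂^2 + a*c*u₂^2*z*Q^2 + 2*a*c*u₂^2*v₀^2 + -2*a*c*u₁*u₂*Q^2 + 2*a*c*u₀^2*v₂^2 + 2*a*c*u₀^2*u₂^2 + -4*a*c^2*v₁*v₂^3 + -4*a*c^2*u₂^2*v₁*v₂ + -4*a*c^2*u₁*u₂*v₂^2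 + -4*a*c^2*u₁*u₂^3 + a^2*c*v₂^2*Q^2 + a^2*c*u₂^2*Q^2 + a^2*c^2*v₂^4 + 2*a^2*c^2*u₂^2*v₂^2 + a^2*c^2*u₂^4) * e0' + (-1*c*Q^4 + 2*c*v₀*v₁*Q^2 + -4*c*v₀^2*v₁^2 + 2*c*u₀*u₁*Q^2 + -8*c*u₀*u₁*v₀*v₁ + -4*c*u₀^2*u₁^2 + -1*c^2*v₂^2*Q^2 + 4*c^2*v₀*v₁*v₂^2 + -1*c^2*u₂^2*Q^2 + 4*c^2*u₂^2*v₀*v₁ + 4*c^2*u₀*u₁*v₂^2 + 4*c^2*u₀*u₁*u₂^2 + -1*c^3*v₂^4 + -2*c^3*u₂^2*v₂^2 + -1*c^3*u₂^4 + -1*b*v₀^2*Q^2 + 2*b*v₀^3*v₁ + 2*b*u₀*u₁*v₀^2 + -1*b*u₀^2*Q^2 + 2*b*u₀^2*v₀*v₁ + 2*b*u₀^3*u₁ + 4*b*c*v₀*v₁^2*v₂ + -1*b*c*v₀^2*v₂^2 + -1*b*c*u₂^2*v₀^2 + 4*b*c*u₁*u₂*v₀*v₁ + 4*b*c*u₀*u₁*v₁*v₂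 + 4*b*c*u₀*u₁^2*u₂ + -1*b*c*u₀^2*v₂^2 + -1*b*c*u₀^2*u₂^2 + -2*b*c^2*v₁*v₂^3 + -2*b*c^2*u₂^2*v₁*v₂ + -2*b*c^2*u₁*u₂*v₂^2 + -2*b*c^2*u₁*u₂^3 + -2*b^2*v₀^2*v₁*v₂ + -2*b^2*u₁*u₂*v₀^2 + -2*b^2*u₀^2*v₁*v₂ + -2*b^2*u₀^2*u₁*u₂ + -1*a*v₀^4 + -2*a*u₀^2*v₀^2 + -1*a*u₀^4 + 4*a*c*v₀^2*v₁*v₂ + 4*a*c*u₁*u₂*v₀^2 + 4*a*c*u₀^2*v₁*v₂ + 4*a*c*u₀^2*u₁*u₂ + -4*a*c^2*v₁^2*v₂^2 + -8*a*c^2*u₁*u₂*v₁*v₂ + -4*a*c^2*u₁^2*u₂^2 + -2*a*b*c*v₀*v₁*v₂^2 + -2*a*b*c*u₂^2*v₀*v₁ + -2*a*b*c*u₀*u₁*v₂^2 + -2*a*b*c*u₀*u₁*u₂^2 + a*b*c^2*v₂^4 + 2*a*b*c^2*u₂^2*v₂^2 + a*b*c^2*u₂^4 + a*b^2*v₀^2*v₂^2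 + a*b^2*u₂^2*v₀^2 + a*b^2*u₀^2*v₂^2 + a*b^2*u₀^2*u₂^2 + -2*a^2*c*v₀^2*v₂^2 + -2*a^2*c*u₂^2*v₀^2 + -2*a^2*c*u₀^2*v₂^2 + -2*a^2*c*u₀^2*u₂^2 + 4*a^2*c^2*v₁*v₂^3 + 4*a^2*c^2*u₂^2*v₁*v₂ + 4*a^2*c^2*u₁*u₂*v₂^2 + 4*a^2*c^2*u₁*u₂^3 + -1*a^3*c^2*v₂^4 + -2*a^3*c^2*u₂^2*v₂^2 + -1*a^3*c^2*u₂^4) * e1' + (6*c*v₀^3*v₁ + 6*c*u₀*u₁*v₀^2 + 6*c*u₀^2*v₀*v₁ + 6*c*u₀^3*u₁ + c^2*v₁^4 + -8*c^2*v₀*v₁^2*v₂ + c^2*v₀^2*v₂^2 + -3*c^2*u₂^2*v₀^2 + -12*c^2*u₁*u₂*v₀*v₁ + 2*c^2*u₁^2*v₁^2 + 4*c^2*u₁^2*v₀*v₂ + c^2*u₁^4 + 4*c^2*u₀*u₂*v₁^2 + 8*c^2*u₀*u₂*v₀*v₂ + -12*c^2*u₀*u₁*v₁*v₂ + -8*c^2*u₀*u₁^2*u₂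 + -3*c^2*u₀^2*v₂^2 + c^2*u₀^2*u₂^2 + 6*c^3*v₁*v₂^3 + 6*c^3*u₂^2*v₁*v₂ + 6*c^3*u₁*u₂*v₂^2 + 6*c^3*u₁*u₂^3 + -2*b*v₀^4 + -4*b*u₀^2*v₀^2 + -2*b*u₀^4 + -2*b*c*v₀*v₁^3 + -2*b*c*v₀^2*v₁*v₂ + 2*b*c*u₁*u₂*v₀^2 + -2*b*c*u₁^2*v₀*v₁ + -4*b*c*u₀*u₂*v₀*v₁ + -2*b*c*u₀*u₁*v₁^2 + -4*b*c*u₀*u₁*v₀*v₂ + -2*b*c*u₀*u₁^3 + 2*b*c*u₀^2*v₁*v₂ + -2*b*c*u₀^2*u₁*u₂ + 3*b*c^2*v₁^2*v₂^2 + -2*b*c^2*v₀*v₂^3 + -1*b*c^2*u₂^2*v₁^2 + -2*b*c^2*u₂^2*v₀*v₂ + 8*b*c^2*u₁*u₂*v₁*v₂ + -1*b*c^2*u₁^2*v₂^2 + 3*b*c^2*u₁^2*u₂^2 + -2*b*c^2*u₀*u₂*v₂^2 + -2*b*c^2*u₀*u₂^3 + b^2*v₀^2*v₁^2 + 2*b^2*v₀^3*v₂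 + b^2*u₁^2*v₀^2 + 2*b^2*u₀*u₂*v₀^2 + b^2*u₀^2*v₁^2 + 2*b^2*u₀^2*v₀*v₂ + b^2*u₀^2*u₁^2 + 2*b^2*u₀^3*u₂ + 2*b^2*c*v₀*v₁*v₂^2 + 2*b^2*c*u₂^2*v₀*v₁ + 2*b^2*c*u₀*u₁*v₂^2 + 2*b^2*c*u₀*u₁*u₂^2 + -1*b^3*v₀^2*v₂^2 + -1*b^3*u₂^2*v₀^2 + -1*b^3*u₀^2*v₂^2 + -1*b^3*u₀^2*u₂^2 + 2*a*c*v₀^2*v₁^2 + -4*a*c*v₀^3*v₂ + -2*a*c*u₁^2*v₀^2 + -4*a*c*u₀*u₂*v₀^2 + 8*a*c*u₀*u₁*v₀*v₁ + -2*a*c*u₀^2*v₁^2 + -4*a*c*u₀^2*v₀*v₂ + 2*a*c*u₀^2*u₁^2 + -4*a*c*u₀^3*u₂ + 2*a*c^2*v₀*v₁*v₂^2 + 2*a*c^2*u₂^2*v₀*v₁ + 2*a*c^2*u₀*u₁*v₂^2 + 2*a*c^2*u₀*u₁*u₂^2 + -2*a*c^3*v₂^4 + -4*a*c^3*u₂^2*v₂^2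 + -2*a*c^3*u₂^4 + -2*a*b*v₀^3*v₁ + -2*a*b*u₀*u₁*v₀^2 + -2*a*b*u₀^2*v₀*v₁ + -2*a*b*u₀^3*u₁ + 2*a*b*c*v₀^2*v₂^2 + 2*a*b*c*u₂^2*v₀^2 + 2*a*b*c*u₀^2*v₂^2 + 2*a*b*c*u₀^2*u₂^2 + -4*a*b*c^2*v₁*v₂^3 + -4*a*b*c^2*u₂^2*v₁*v₂ + -4*a*b*c^2*u₁*u₂*v₂^2 + -4*a*b*c^2*u₁*u₂^3 + a^2*v₀^4 + 2*a^2*u₀^2*v₀^2 + a^2*u₀^4 + a^2*b*c^2*v₂^4 + 2*a^2*b*c^2*u₂^2*v₂^2 + a^2*b*c^2*u₂^4) * e2'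
  have hevalz : P.eval z = z ^ 3 + a * z ^ 2 + b * z + c := by
    rw [hP]; simp [eval_add, eval_mul, eval_pow, -eq_intCast]
  have hQne : Q ^ 3 ≠ 0 := by
    simp [hQ]; omega
  have key2 : (Q ^ 3) ^ 2 * P.eval z =
      ((-3*u₀*v₀^2 + u₀^3 + -3*c*u₂*v₀*v₁ + 3*c*u₁*v₁^2 + -3*c*u₁*v₀*v₂ + -1*c*u₁^3 + -3*c*u₀*v₁*v₂ + 3*c*u₀*u₁*u₂ + -3*c^2*u₂*v₂^2 + c^2*u₂^3 + 2*b*u₂*v₀^2 + -2*b*u₁*v₀*v₁ + -1*b*u₀*v₁^2 + 4*b*u₀*v₀*v₂ + b*u₀*u₁^2 + -2*b*u₀^2*u₂ + 2*b*c*u₂*v₁*v₂ + b*c*u₁*v₂^2 + -1*b*c*u₁*u₂^2 + -2*b^2*u₂*v₀*v₂ + -1*b^2*u₀*v₂^2 + b^2*u₀*u₂^2 + a*u₁*v₀^2 + 2*a*u₀*v₀*v₁ + -1*a*u₀^2*u₁ + -1*a*c*u₂*v₁^2 + 4*a*c*u₂*v₀*v₂ + -2*a*c*u₁*v₁*v₂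 + a*c*u₁^2*u₂ + 2*a*c*u₀*v₂^2 + -2*a*c*u₀*u₂^2 + a*b*u₂*v₀*v₁ + a*b*u₁*v₀*v₂ + a*b*u₀*v₁*v₂ + -1*a*b*u₀*u₁*u₂ + -1*a^2*u₂*v₀^2 + -2*a^2*u₀*v₀*v₂ + a^2*u₀^2*u₂)) ^ 2 + ((-1*v₀^3 + 3*u₀^2*v₀ + c*v₁^3 + -3*c*v₀*v₁*v₂ + 3*c*u₁*u₂*v₀ + -3*c*u₁^2*v₁ + 3*c*u₀*u₂*v₁ + 3*c*u₀*u₁*v₂ + -1*c^2*v₂^3 + 3*c^2*u₂^2*v₂ + -1*b*v₀*v₁^2 + 2*b*v₀^2*v₂ + b*u₁^2*v₀ + -4*b*u₀*u₂*v₀ + 2*b*u₀*u₁*v₁ + -2*b*u₀^2*v₂ + b*c*v₁*v₂^2 + -1*b*c*u₂^2*v₁ + -2*b*c*u₁*u₂*v₂ + -1*b^2*v₀*v₂^2 + b^2*u₂^2*v₀ + 2*b^2*u₀*u₂*v₂ + a*v₀^2*v₁ + -2*a*u₀*u₁*v₀ + -1*a*u₀^2*v₁ + -1*a*c*v₁^2*v₂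 + 2*a*c*v₀*v₂^2 + -2*a*c*u₂^2*v₀ + 2*a*c*u₁*u₂*v₁ + a*c*u₁^2*v₂ + -4*a*c*u₀*u₂*v₂ + a*b*v₀*v₁*v₂ + -1*a*b*u₁*u₂*v₀ + -1*a*b*u₀*u₂*v₁ + -1*a*b*u₀*u₁*v₂ + -1*a^2*v₀^2*v₂ + 2*a^2*u₀*u₂*v₀ + a^2*u₀^2*v₂)) ^ 2 := by
    rw [hevalz]; linear_combination key
  obtain ⟨x, y, hxy⟩ := int_descent (Q ^ 3) (P.eval z) _ _ hQne key2
  exact ⟨x, y, hxy⟩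
end

section
/- Let θ be a real algebraic integer of degree 3, let l_2 be a unit of O_{ℚ(θ,i)} of infinite order with complex modulus |l_2| = 1, and let Y ≥ 2. Then for every nonzero b ∈ ℚ(θ, i), #{n ∈ ℤ : b · l_2^n ∈ C_θ(Y)} ≪ log Y, where the implied constant depends on θ and l_2 but not on b. -/
open NumberField Complex

/-- The set `C_θ(Y)` of elements `(c₀ + i d₀) + (c₁ + i d₁)θ + (c₂ + i d₂)θ²` of
`ℚ(θ, i) ⊆ ℂ` with integer coefficients of absolute value at most `Y`. -/
def Ctheta (θ : ℝ) (Y : ℝ) : Set ℂ :=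
  {z | ∃ c₀ c₁ c₂ d₀ d₁ d₂ : ℤ,
    z = ((c₀ : ℂ) + (d₀ : ℂ) * I) + ((c₁ : ℂ) + (d₁ : ℂ) * I) * (θ : ℂ) +
        ((c₂ : ℂ) + (d₂ : ℂ) * I) * (θ : ℂ) ^ 2 ∧
    |(c₀ : ℝ)| ≤ Y ∧ |(c₁ : ℝ)| ≤ Y ∧ |(c₂ : ℝ)| ≤ Y ∧
    |(d₀ : ℝ)| ≤ Y ∧ |(d₁ : ℝ)| ≤ Y ∧ |(d₂ : ℝ)| ≤ Y}

private lemma cnt_pos (c a u : ℝ) (hc : 0 < c) (hau : a ≤ u) (S : Set ℤ)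
    (hS : ∀ n ∈ S, a ≤ n * c ∧ n * c ≤ u) :
    (S.ncard : ℝ) ≤ (u - a) / c + 1 := by
  have hsub : S ⊆ ↑(Finset.Icc ⌈a / c⌉ ⌊u / c⌋) := by
    intro n hn
    obtain ⟨h1, h2⟩ := hS n hn
    simp only [Finset.coe_Icc, Set.mem_Icc]
    exact ⟨Int.ceil_le.mpr ((div_le_iff₀ hc).mpr h1),
      Int.le_floor.mpr ((le_div_iff₀ hc).mpr h2)⟩
  have h1 := Set.ncard_le_ncard hsub (Finset.finite_toSet _)
  rw [Set.ncard_coe_finset] at h1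
  have hdiv : a / c ≤ u / c := by gcongr
  have h2 : ((Finset.Icc ⌈a / c⌉ ⌊u / c⌋).card : ℝ) ≤ (u - a) / c + 1 := by
    rw [Int.card_Icc, sub_div]
    rcases le_or_gt (⌊u / c⌋ + 1 - ⌈a / c⌉) 0 with h | h
    · rw [Int.toNat_of_nonpos h]
      push_cast
      linarith
    · have e : ((⌊u / c⌋ + 1 - ⌈a / c⌉).toNat : ℝ) = (⌊u / c⌋ : ℝ) + 1 - ⌈a / c⌉ := by
        exact_mod_cast congrArg (Int.cast : ℤ → ℝ) (Int.toNat_of_nonneg h.le)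
      rw [e]
      have := Int.floor_le (u / c)
      have := Int.le_ceil (a / c)
      linarith
  calc (S.ncard : ℝ) ≤ _ := by exact_mod_cast h1
    _ ≤ _ := h2

private lemma cnt (c a u : ℝ) (hc : c ≠ 0) (hau : a ≤ u) (S : Set ℤ)
    (hS : ∀ n ∈ S, a ≤ n * c ∧ n * c ≤ u) :
    (S.ncard : ℝ) ≤ (u - a) / |c| + 1 := by
  rcases hc.lt_or_gt with h | h
  · rw [abs_of_neg h]
    have := cnt_pos (-c) (-u) (-a) (by linarith) (by linarith) S (fun n hn => by
      obtain ⟨h1, h2⟩ := hS n hn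
      constructor <;> rw [mul_neg] <;> linarith)
    convert this using 2
    ring
  · rw [abs_of_pos h]
    exact cnt_pos c a u h hau S hS

set_option maxHeartbeats 1600000 in
theorem modulus_one_orbit_bound
    (θ : ℝ) (hint : IsIntegral ℤ θ) (hdeg : (minpoly ℚ θ).natDegree = 3)
    (K : IntermediateField ℚ ℂ)
    (hK : K = IntermediateField.adjoin ℚ {(θ : ℂ), Complex.I})
    [NumberField K]
    (l₂ : (𝓞 K)ˣ) (hord : ¬ IsOfFinOrder l₂)
    (hmod : ‖(((l₂ : 𝓞 K) : K) : ℂ)‖ = 1) :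
    ∃ C : ℝ, 0 < C ∧ ∀ Y : ℝ, 2 ≤ Y → ∀ b : K, b ≠ 0 →
      (Set.ncard {n : ℤ | ((b * (((l₂ ^ n : (𝓞 K)ˣ) : 𝓞 K) : K) : K) : ℂ) ∈ Ctheta θ Y} : ℝ) ≤
        C * Real.log Y := by
  classical
  -- basic elements of `K`
  have hθmem : (θ : ℂ) ∈ K := by
    rw [hK]; exact IntermediateField.subset_adjoin ℚ _ (Set.mem_insert _ _)
  have hImem : Complex.I ∈ K := by
    rw [hK]; exact IntermediateField.subset_adjoin ℚ _ (Set.mem_insert_of_mem _ rfl)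
  set θK : K := ⟨(θ : ℂ), hθmem⟩ with hθK_def
  set iK : K := ⟨Complex.I, hImem⟩ with hiK_def
  have hiKsq : iK ^ 2 = -1 := by
    apply Subtype.coe_injective
    push_cast
    exact Complex.I_sq
  have hiKint : IsIntegral ℤ iK := by
    refine ⟨Polynomial.X ^ 2 + 1, by simpa using Polynomial.monic_X_pow_add_C (1 : ℤ) two_ne_zero, ?_⟩
    simp only [Polynomial.eval₂_add, Polynomial.eval₂_X_pow, Polynomial.eval₂_one]
    rw [hiKsq]
    ring
  have hθKint : IsIntegral ℤ θK := by
    have hθCint : IsIntegral ℤ ((θ : ℝ) : ℂ) := hint.map Complex.ofRealHom.toIntAlgHom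
    exact (isIntegral_algebraMap_iff (algebraMap K ℂ).injective).mp hθCint
  -- embeddings
  have hNE : Nonempty (K →ₐ[ℚ] ℂ) := ⟨K.val⟩
  have habsI : ∀ σ : K →ₐ[ℚ] ℂ, ‖(σ iK)‖ = 1 := by
    intro σ
    have h2 : (σ iK) ^ 2 = -1 := by rw [← map_pow, hiKsq, map_neg, map_one]
    have h3 : (‖(σ iK)‖) ^ 2 = 1 := by
      rw [← norm_pow, h2]
      simp
    have h4 := norm_nonneg (σ iK)
    nlinarith
  -- norm lower bound
  have key : ∀ x : K, IsIntegral ℤ x → x ≠ 0 →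
      (1 : ℝ) ≤ ∏ σ : K →ₐ[ℚ] ℂ, ‖(σ x)‖ := by
    intro x hxi hx0
    set y : 𝓞 K := ⟨x, hxi⟩ with hy_def
    have hy0 : y ≠ 0 := by
      intro h
      apply hx0
      have := congrArg (algebraMap (𝓞 K) K) h
      exact this
    have hnorm : (1 : ℚ) ≤ |Algebra.norm ℚ x| := by
      have h1 : 1 ≤ |Algebra.norm ℤ y| := Int.one_le_abs (Algebra.norm_ne_zero_iff.mpr hy0)
      have h2 : ((|Algebra.norm ℤ y| : ℤ) : ℚ) = |Algebra.norm ℚ x| := by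
        rw [Int.cast_abs, Algebra.coe_norm_int y]
        rfl
      calc (1 : ℚ) = ((1 : ℤ) : ℚ) := by norm_num
        _ ≤ ((|Algebra.norm ℤ y| : ℤ) : ℚ) := by exact_mod_cast h1
        _ = _ := h2
    have hprod : ∏ σ : K →ₐ[ℚ] ℂ, ‖(σ x)‖ = |((Algebra.norm ℚ x : ℚ) : ℝ)| := by
      have h := Algebra.norm_eq_prod_embeddings ℚ ℂ (x := x)
      have h2 := congrArg (‖·‖) h
      rw [norm_prod] at h2
      rw [← h2]
      rw [show (algebraMap ℚ ℂ) (Algebra.norm ℚ x) = (((Algebra.norm ℚ x : ℚ) : ℝ) : ℂ) by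
        push_cast; rfl]
      exact (Complex.norm_real _).trans (Real.norm_eq_abs _)
    rw [hprod]
    exact_mod_cast (by exact_mod_cast hnorm : (1 : ℝ) ≤ |((Algebra.norm ℚ x : ℚ) : ℝ)|)
  -- choose an embedding where `l₂` has absolute value ≠ 1
  have hexφ : ∃ σ : K →ₐ[ℚ] ℂ, ‖(σ ((l₂ : 𝓞 K) : K))‖ ≠ 1 := by
    by_contra hcon
    push_neg at hcon
    have hl2i : IsIntegral ℤ ((l₂ : 𝓞 K) : K) := RingOfIntegers.isIntegral_coe _
    obtain ⟨m, hm, hpow⟩ := NumberField.Embeddings.pow_eq_one_of_norm_eq_one K ℂ hl2i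
      (fun ψ => by
        exact hcon ψ.toRatAlgHom)
    apply hord
    refine isOfFinOrder_iff_pow_eq_one.mpr ⟨m, hm, ?_⟩
    apply Units.ext
    apply RingOfIntegers.coe_injective
    rw [Units.val_pow_eq_pow_val]
    push_cast
    simpa using hpow
  obtain ⟨φ, hφ⟩ := hexφ
  have hlK0 : ((l₂ : 𝓞 K) : K) ≠ 0 := (l₂.isUnit.map (algebraMap (𝓞 K) K)).ne_zero
  set t : ℝ := ‖(φ ((l₂ : 𝓞 K) : K))‖ with ht_def
  have ht0 : 0 < t := by
    rw [ht_def]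
    exact (norm_pos_iff).mpr (fun h => hlK0 (map_eq_zero_iff _ (RingHom.injective _) |>.mp h))
  have hc : Real.log t ≠ 0 := Real.log_ne_zero_of_pos_of_ne_one ht0 hφ
  -- constants
  set A : ℝ := Finset.univ.sup' (Finset.univ_nonempty) (fun σ : K →ₐ[ℚ] ℂ => ‖(σ θK)‖)
    with hA_def
  have hAmax : ∀ σ : K →ₐ[ℚ] ℂ, ‖(σ θK)‖ ≤ A := by
    intro σ
    rw [hA_def]
    exact Finset.le_sup' (fun σ : K →ₐ[ℚ] ℂ => ‖(σ θK)‖) (Finset.mem_univ σ)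
  have hA0 : 0 ≤ A := le_trans (norm_nonneg _) (hAmax φ)
  set B : ℝ := 2 * (1 + A + A ^ 2) with hB_def
  have hB2 : 2 ≤ B := by nlinarith
  have hlogB : 0 ≤ Real.log B := Real.log_nonneg (by linarith)
  set D : ℕ := Fintype.card (K →ₐ[ℚ] ℂ) with hD_def
  have hD1 : 1 ≤ D := Fintype.card_pos
  have hlog2 : 0 < Real.log 2 := Real.log_pos one_lt_two
  refine ⟨(D * (Real.log B / Real.log 2 + 1)) / |Real.log t| + 1 / Real.log 2, ?_, ?_⟩
  · have h1 : 0 ≤ (D * (Real.log B / Real.log 2 + 1)) / |Real.log t| := by positivity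
    have h2 : 0 < 1 / Real.log 2 := by positivity
    linarith
  intro Y hY b hb
  have hY0 : 0 < Y := by linarith
  have hBY1 : 1 ≤ B * Y := by nlinarith
  have hBY0 : 0 < B * Y := by linarith
  have hlogBY : 0 ≤ Real.log (B * Y) := Real.log_nonneg hBY1
  set S := {n : ℤ | ((b * (((l₂ ^ n : (𝓞 K)ˣ) : 𝓞 K) : K) : K) : ℂ) ∈ Ctheta θ Y} with hS_def
  have hbφ : ‖(φ b)‖ ≠ 0 :=
    (norm_pos_iff.mpr (fun h => hb (map_eq_zero_iff _ (RingHom.injective _) |>.mp h))).ne'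
  -- membership gives interval bounds for `n * log t`
  have hmem : ∀ n ∈ S,
      (-(((D - 1 : ℕ) : ℝ)) * Real.log (B * Y) - Real.log (‖(φ b)‖) ≤
        n * Real.log t) ∧
      (n * Real.log t ≤ Real.log (B * Y) - Real.log (‖(φ b)‖)) := by
    intro n hn
    obtain ⟨c₀, c₁, c₂, d₀, d₁, d₂, hz, h₁, h₂, h₃, h₄, h₅, h₆⟩ := hn
    set x : K := b * (((l₂ ^ n : (𝓞 K)ˣ) : 𝓞 K) : K) with hx_def
    have hxK : x = ((c₀ : K) + (d₀ : K) * iK) + ((c₁ : K) + (d₁ : K) * iK) * θK +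
        ((c₂ : K) + (d₂ : K) * iK) * θK ^ 2 := by
      apply Subtype.coe_injective
      push_cast
      exact hz
    have hzint : ∀ m : ℤ, IsIntegral ℤ ((m : K)) := fun m =>
      eq_intCast (algebraMap ℤ K) m ▸ isIntegral_algebraMap
    have hxint : IsIntegral ℤ x := by
      rw [hxK]
      exact (((hzint c₀).add ((hzint d₀).mul hiKint)).add
        (((hzint c₁).add ((hzint d₁).mul hiKint)).mul hθKint)).add
        ((((hzint c₂).add ((hzint d₂).mul hiKint))).mul (hθKint.pow 2))
    have hx0 : x ≠ 0 :=
      mul_ne_zero hb (((l₂ ^ n).isUnit.map (algebraMap (𝓞 K) K)).ne_zero)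
    have hσbound : ∀ σ : K →ₐ[ℚ] ℂ, ‖(σ x)‖ ≤ B * Y := by
      intro σ
      have hterm : ∀ (cc dd : ℤ), |(cc : ℝ)| ≤ Y → |(dd : ℝ)| ≤ Y →
          ‖((cc : ℂ) + (dd : ℂ) * σ iK)‖ ≤ 2 * Y := by
        intro cc dd hcc hdd
        calc ‖((cc : ℂ) + (dd : ℂ) * σ iK)‖ ≤
            ‖(cc : ℂ)‖ + ‖((dd : ℂ) * σ iK)‖ := norm_add_le _ _
          _ = |(cc : ℝ)| + |(dd : ℝ)| * ‖(σ iK)‖ := by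
            rw [norm_mul, Complex.norm_intCast, Complex.norm_intCast]
          _ ≤ Y + Y * 1 := by
            rw [habsI σ]
            have := abs_nonneg ((dd : ℝ))
            nlinarith
          _ = 2 * Y := by ring
      have hσθ : ‖(σ θK)‖ ≤ A := hAmax σ
      have hσθ0 : 0 ≤ ‖(σ θK)‖ := norm_nonneg _
      rw [hxK]
      simp only [map_add, map_mul, map_pow, map_intCast]
      set u0 : ℂ := (c₀ : ℂ) + (d₀ : ℂ) * σ iK with hu0
      set u1 : ℂ := (c₁ : ℂ) + (d₁ : ℂ) * σ iK with hu1
      set u2 : ℂ := (c₂ : ℂ) + (d₂ : ℂ) * σ iK with hu2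
      have hsum : ‖(u0 + u1 * σ θK + u2 * σ θK ^ 2)‖ ≤
          ‖u0‖ + ‖u1‖ * ‖(σ θK)‖ +
            ‖u2‖ * ‖(σ θK)‖ ^ 2 := by
        have a1 := norm_add_le (u0 + u1 * σ θK) (u2 * σ θK ^ 2)
        have a2 := norm_add_le u0 (u1 * σ θK)
        simp only [norm_mul, norm_pow] at a1 a2
        linarith
      have t1 := hterm c₀ d₀ h₁ h₄
      have t2 := hterm c₁ d₁ h₂ h₅
      have t3 := hterm c₂ d₂ h₃ h₆
      rw [← hu0] at t1
      rw [← hu1] at t2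
      rw [← hu2] at t3
      have hσθsq : (‖(σ θK)‖) ^ 2 ≤ A ^ 2 := by nlinarith
      have p1 : ‖u1‖ * ‖(σ θK)‖ ≤ 2 * Y * A := by
        have := norm_nonneg u1
        nlinarith
      have p2 : ‖u2‖ * (‖(σ θK)‖) ^ 2 ≤ 2 * Y * A ^ 2 := by
        have := norm_nonneg u2
        nlinarith
      have hBYe : B * Y = 2 * Y + 2 * Y * A + 2 * Y * A ^ 2 := by rw [hB_def]; ring
      linarith
    -- zpow identity
    set g : 𝓞 K →+* ℂ := (φ : K →+* ℂ).comp (algebraMap (𝓞 K) K) with hg_def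
    have hφx : ‖(φ x)‖ = ‖(φ b)‖ * t ^ n := by
      have e1 : φ (((l₂ ^ n : (𝓞 K)ˣ) : 𝓞 K) : K) =
          ((Units.map (g : 𝓞 K →* ℂ) (l₂ ^ n) : ℂˣ) : ℂ) := rfl
      have e2 : Units.map (g : 𝓞 K →* ℂ) (l₂ ^ n) = (Units.map (g : 𝓞 K →* ℂ) l₂) ^ n :=
        MonoidHom.map_zpow _ l₂ n
      have e3 : (((Units.map (g : 𝓞 K →* ℂ) l₂) ^ n : ℂˣ) : ℂ) =
          (((Units.map (g : 𝓞 K →* ℂ) l₂) : ℂˣ) : ℂ) ^ n := Units.val_zpow_eq_zpow_val _ n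
      have e4 : ‖(((Units.map (g : 𝓞 K →* ℂ) l₂) : ℂˣ) : ℂ)‖ = t := rfl
      rw [hx_def, map_mul, e1, e2, e3, norm_mul, norm_zpow, e4]
    have habsφx0 : 0 < ‖(φ x)‖ :=
      norm_pos_iff.mpr (fun h => hx0 (map_eq_zero_iff _ (RingHom.injective _) |>.mp h))
    have hlogx : Real.log (‖(φ x)‖) =
        Real.log (‖(φ b)‖) + n * Real.log t := by
      rw [hφx, Real.log_mul hbφ (zpow_ne_zero _ ht0.ne'), Real.log_zpow]
    have hup : Real.log (‖(φ x)‖) ≤ Real.log (B * Y) :=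
      Real.log_le_log habsφx0 (hσbound φ)
    have hlow : -(((D - 1 : ℕ) : ℝ)) * Real.log (B * Y) ≤ Real.log (‖(φ x)‖) := by
      have h1 : (1 : ℝ) ≤ ‖(φ x)‖ * (B * Y) ^ (D - 1) := by
        have hkey := key x hxint hx0
        rw [← Finset.mul_prod_erase Finset.univ _ (Finset.mem_univ φ)] at hkey
        refine hkey.trans (mul_le_mul_of_nonneg_left ?_ (norm_nonneg _))
        have hple : ∏ σ ∈ Finset.univ.erase φ, ‖(σ x)‖ ≤
            (B * Y) ^ ((Finset.univ.erase φ).card) := by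
          rw [← Finset.prod_const]
          exact Finset.prod_le_prod (fun σ _ => norm_nonneg _) (fun σ _ => hσbound σ)
        rwa [Finset.card_erase_of_mem (Finset.mem_univ φ), Finset.card_univ] at hple
      have h2 : (0 : ℝ) ≤ Real.log (‖(φ x)‖ * (B * Y) ^ (D - 1)) := by
        rw [← Real.log_one]
        exact Real.log_le_log one_pos h1
      rw [Real.log_mul habsφx0.ne' (by positivity), Real.log_pow] at h2
      linarith
    constructor
    · linarith [hlow, hlogx]
    · linarith [hup, hlogx]
  -- apply the counting lemma
  have hau : -(((D - 1 : ℕ) : ℝ)) * Real.log (B * Y) - Real.log (‖(φ b)‖) ≤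
      Real.log (B * Y) - Real.log (‖(φ b)‖) := by
    have : (0 : ℝ) ≤ ((D - 1 : ℕ) : ℝ) := Nat.cast_nonneg _
    nlinarith
  have hcount := cnt (Real.log t) _ _ hc hau S hmem
  have hdiff : (Real.log (B * Y) - Real.log (‖(φ b)‖)) -
      (-(((D - 1 : ℕ) : ℝ)) * Real.log (B * Y) - Real.log (‖(φ b)‖)) =
      (D : ℝ) * Real.log (B * Y) := by
    have : ((D - 1 : ℕ) : ℝ) = (D : ℝ) - 1 := by
      rw [Nat.cast_sub hD1]; norm_num
    rw [this]; ring
  rw [hdiff] at hcount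
  refine hcount.trans ?_
  -- final arithmetic
  have hlogY : Real.log 2 ≤ Real.log Y := Real.log_le_log two_pos hY
  have hlogY0 : 0 < Real.log Y := lt_of_lt_of_le hlog2 hlogY
  have habslog : 0 < |Real.log t| := abs_pos.mpr hc
  rw [Real.log_mul (by linarith : B ≠ 0) hY0.ne']
  set L := Real.log Y
  set β := Real.log B
  set m := |Real.log t|
  have e1 : β + L ≤ (β / Real.log 2 + 1) * L := by
    have h1 : β * Real.log 2 ≤ β * L := mul_le_mul_of_nonneg_left hlogY hlogB
    have h3 : β ≤ β * L / Real.log 2 := by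
      rw [le_div_iff₀ hlog2]; exact h1
    have h4 : (β / Real.log 2 + 1) * L = β * L / Real.log 2 + L := by ring
    linarith
  have e2 : (D : ℝ) * (β + L) / m ≤ (D : ℝ) * ((β / Real.log 2 + 1) * L) / m := by
    gcongr
  have e3 : (D : ℝ) * ((β / Real.log 2 + 1) * L) / m = (D : ℝ) * (β / Real.log 2 + 1) / m * L := by
    ring
  have e4 : (1 : ℝ) ≤ 1 / Real.log 2 * L := by
    rw [div_mul_eq_mul_div, one_mul, le_div_iff₀ hlog2]
    linarith
  calc (D : ℝ) * (β + L) / m + 1 ≤ (D : ℝ) * (β / Real.log 2 + 1) / m * L +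
        1 / Real.log 2 * L := by
        rw [← e3]
        linarith
    _ = ((D : ℝ) * (β / Real.log 2 + 1) / m + 1 / Real.log 2) * L := by ring
end

section
/- Let p(x) = x^3 + a_2 x^2 + a_1 x + a_0 ∈ ℤ[x] be irreducible with a_2^2 − a_1 even and a_1 a_2 − a_0 odd, and let θ be a real root of p. Then every element of S lies in R_{θ,1}(∞, ∞); that is, if ((u_0 + u_1θ + u_2θ^2), (v_0 + v_1θ + v_2θ^2)) ∈ S, then there exists an integer n with (u_0 + u_1θ + u_2θ^2)^2 + (v_0 + v_1θ + v_2θ^2)^2 = n − θ. -/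
open Polynomial

/-- `h₁(u₁, u₂, v₁, v₂)`. -/
def h1 (a₀ a₁ a₂ u₁ u₂ v₁ v₂ : ℤ) : ℤ :=
  -1 + 2 * a₁ * u₁ * u₂ - u₂ ^ 2 * (a₁ * a₂ - a₀) +
    2 * a₁ * v₁ * v₂ - v₂ ^ 2 * (a₁ * a₂ - a₀)

/-- `h₂(u₁, u₂, v₁, v₂)`. -/
def h2 (a₀ a₁ a₂ u₁ u₂ v₁ v₂ : ℤ) : ℤ :=
  -u₁ ^ 2 + 2 * a₂ * u₁ * u₂ - u₂ ^ 2 * (a₂ ^ 2 - a₁) -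
    v₁ ^ 2 + 2 * a₂ * v₁ * v₂ - v₂ ^ 2 * (a₂ ^ 2 - a₁)

theorem S_subset_Rtheta_one
    (a₀ a₁ a₂ : ℤ)
    (hirr : Irreducible (X ^ 3 + C a₂ * X ^ 2 + C a₁ * X + C a₀ : ℤ[X]))
    (heven : Even (a₂ ^ 2 - a₁)) (hodd : Odd (a₁ * a₂ - a₀))
    (θ : ℝ) (hroot : θ ^ 3 + (a₂ : ℝ) * θ ^ 2 + (a₁ : ℝ) * θ + (a₀ : ℝ) = 0)
    (u₀ u₁ u₂ v₀ v₁ v₂ : ℤ)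
    (hv₂ : Even v₂) (hgcd : Int.gcd u₂ v₂ = 1)
    (hu₁ : Odd u₁) (hv₁ : Odd v₁)
    (hI : u₁ * v₂ - v₁ * u₂ = 1)
    (hu₀ : 2 * u₀ = v₂ * h1 a₀ a₁ a₂ u₁ u₂ v₁ v₂ - v₁ * h2 a₀ a₁ a₂ u₁ u₂ v₁ v₂)
    (hv₀ : 2 * v₀ = -u₂ * h1 a₀ a₁ a₂ u₁ u₂ v₁ v₂ + u₁ * h2 a₀ a₁ a₂ u₁ u₂ v₁ v₂) :
    ∃ n : ℤ,
      ((u₀ : ℝ) + (u₁ : ℝ) * θ + (u₂ : ℝ) * θ ^ 2) ^ 2 +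
        ((v₀ : ℝ) + (v₁ : ℝ) * θ + (v₂ : ℝ) * θ ^ 2) ^ 2 = (n : ℝ) - θ := by
  refine ⟨u₀ ^ 2 + v₀ ^ 2 - 2 * a₀ * (u₁ * u₂ + v₁ * v₂) + a₀ * a₂ * (u₂ ^ 2 + v₂ ^ 2), ?_⟩
  simp only [h1, h2] at hu₀ hv₀
  have e1 : (2 * (u₀ * u₁ + v₀ * v₁) : ℤ) =
      -1 + 2 * a₁ * u₁ * u₂ - u₂ ^ 2 * (a₁ * a₂ - a₀) +
        2 * a₁ * v₁ * v₂ - v₂ ^ 2 * (a₁ * a₂ - a₀) := by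
    linear_combination u₁ * hu₀ + v₁ * hv₀ +
      (-1 + 2 * a₁ * u₁ * u₂ - u₂ ^ 2 * (a₁ * a₂ - a₀) +
        2 * a₁ * v₁ * v₂ - v₂ ^ 2 * (a₁ * a₂ - a₀)) * hI
  have e2 : (2 * (u₀ * u₂ + v₀ * v₂) : ℤ) =
      -u₁ ^ 2 + 2 * a₂ * u₁ * u₂ - u₂ ^ 2 * (a₂ ^ 2 - a₁) -
        v₁ ^ 2 + 2 * a₂ * v₁ * v₂ - v₂ ^ 2 * (a₂ ^ 2 - a₁) := by
    linear_combination u₂ * hu₀ + v₂ * hv₀ +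
      (-u₁ ^ 2 + 2 * a₂ * u₁ * u₂ - u₂ ^ 2 * (a₂ ^ 2 - a₁) -
        v₁ ^ 2 + 2 * a₂ * v₁ * v₂ - v₂ ^ 2 * (a₂ ^ 2 - a₁)) * hI
  have e1R : (2 * ((u₀ : ℝ) * u₁ + v₀ * v₁)) =
      -1 + 2 * a₁ * u₁ * u₂ - u₂ ^ 2 * (a₁ * a₂ - a₀) +
        2 * a₁ * v₁ * v₂ - v₂ ^ 2 * (a₁ * a₂ - a₀) := by exact_mod_cast e1
  have e2R : (2 * ((u₀ : ℝ) * u₂ + v₀ * v₂)) =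
      -u₁ ^ 2 + 2 * a₂ * u₁ * u₂ - u₂ ^ 2 * (a₂ ^ 2 - a₁) -
        v₁ ^ 2 + 2 * a₂ * v₁ * v₂ - v₂ ^ 2 * (a₂ ^ 2 - a₁) := by exact_mod_cast e2
  push_cast
  linear_combination (((u₂ : ℝ) ^ 2 + v₂ ^ 2) * θ + 2 * (u₁ * u₂ + v₁ * v₂) -
      a₂ * (u₂ ^ 2 + v₂ ^ 2)) * hroot + θ ^ 2 * e2R + θ * e1R
end

section
/- Let p(x) = x^3 + a_2 x^2 + a_1 x + a_0 ∈ ℤ[x] be irreducible with a_2^2 − a_1 even and a_1 a_2 − a_0 odd, and let θ be a real root of p. For every c > 0 there exist F(c) > 0 with F(c) → 0 as c → 0+ and N_c > 0 such that for all X ≥ N_c and all coprime integers α, β with α even and 1 ≤ β ≤ α ≤ c·X^{1/6}, one has S_c(α, β, X) ⊂ R_{θ,1}(F(c)·X^{1/2}, ∞); that is, every tuple in S_c(α, β, X) consists of elements of ℤ[θ] all of whose coefficients have absolute value at most F(c)·X^{1/2}. -/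
open Polynomial

/-- The set `S_c(α, β, X)`: tuples `((u₀+u₁θ+u₂θ²), (v₀+v₁θ+v₂θ²)) ∈ S` with
`v₂ = α`, `u₂ = β`, `|v₁| ≤ c·X^{1/6}` and `v₁ ≡ v(α,β) (mod 2α)`, where `vab` plays the
role of the fixed odd integer `v(α,β)`. -/
def Sc (θ : ℝ) (a₀ a₁ a₂ : ℤ) (c X : ℝ) (α β vab : ℤ) : Set (ℝ × ℝ) :=
  {p | ∃ u₀ u₁ u₂ v₀ v₁ v₂ : ℤ,
    p.1 = (u₀ : ℝ) + (u₁ : ℝ) * θ + (u₂ : ℝ) * θ ^ 2 ∧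
    p.2 = (v₀ : ℝ) + (v₁ : ℝ) * θ + (v₂ : ℝ) * θ ^ 2 ∧
    Even v₂ ∧ Int.gcd u₂ v₂ = 1 ∧ Odd u₁ ∧ Odd v₁ ∧
    u₁ * v₂ - v₁ * u₂ = 1 ∧
    2 * u₀ = v₂ * h1 a₀ a₁ a₂ u₁ u₂ v₁ v₂ - v₁ * h2 a₀ a₁ a₂ u₁ u₂ v₁ v₂ ∧
    2 * v₀ = -u₂ * h1 a₀ a₁ a₂ u₁ u₂ v₁ v₂ + u₁ * h2 a₀ a₁ a₂ u₁ u₂ v₁ v₂ ∧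
    v₂ = α ∧ u₂ = β ∧ |(v₁ : ℝ)| ≤ c * X ^ ((1 : ℝ) / 6) ∧ (2 * α : ℤ) ∣ (v₁ - vab)}

private lemma abs_axy {a x y D : ℝ} (hx : |x| ≤ D) (hy : |y| ≤ D) :
    |a * x * y| ≤ |a| * (D * D) := by
  calc |a * x * y| = |a| * |x| * |y| := by rw [abs_mul, abs_mul]
    _ ≤ |a| * D * D :=
      mul_le_mul (mul_le_mul_of_nonneg_left hx (abs_nonneg a)) hy (abs_nonneg y)
        (mul_nonneg (abs_nonneg a) ((abs_nonneg x).trans hx))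
    _ = |a| * (D * D) := by ring

private lemma abs_sum5 (x1 x2 x3 x4 x5 : ℝ) :
    |x1 + x2 + x3 + x4 + x5| ≤ |x1| + |x2| + |x3| + |x4| + |x5| := by
  calc |x1 + x2 + x3 + x4 + x5| ≤ |x1 + x2 + x3 + x4| + |x5| := abs_add_le _ _
    _ ≤ (|x1 + x2 + x3| + |x4|) + |x5| := add_le_add_left (abs_add_le _ _) _
    _ ≤ ((|x1 + x2| + |x3|) + |x4|) + |x5| :=
        add_le_add_left (add_le_add_left (abs_add_le _ _) _) _
    _ ≤ (((|x1| + |x2|) + |x3|) + |x4|) + |x5| :=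
        add_le_add_left (add_le_add_left (add_le_add_left (abs_add_le _ _) _) _) _

private lemma abs_sum6 (x1 x2 x3 x4 x5 x6 : ℝ) :
    |x1 + x2 + x3 + x4 + x5 + x6| ≤ |x1| + |x2| + |x3| + |x4| + |x5| + |x6| := by
  calc |x1 + x2 + x3 + x4 + x5 + x6| ≤ |x1 + x2 + x3 + x4 + x5| + |x6| := abs_add_le _ _
    _ ≤ (|x1| + |x2| + |x3| + |x4| + |x5|) + |x6| := add_le_add_left (abs_sum5 _ _ _ _ _) _

private lemma h1_bound (a₀ a₁ a₂ u₁ u₂ v₁ v₂ : ℤ) {D : ℝ} (hD : 1 ≤ D)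
    (hu1 : |(u₁:ℝ)| ≤ D) (hu2 : |(u₂:ℝ)| ≤ D) (hv1 : |(v₁:ℝ)| ≤ D) (hv2 : |(v₂:ℝ)| ≤ D) :
    |((h1 a₀ a₁ a₂ u₁ u₂ v₁ v₂ : ℤ) : ℝ)| ≤
      (1 + 4 * |(a₁:ℝ)| + 2 * |(a₁:ℝ) * a₂ - a₀|) * (D * D) := by
  have hexp : ((h1 a₀ a₁ a₂ u₁ u₂ v₁ v₂ : ℤ) : ℝ) =
      (-1) + (2*(a₁:ℝ))*u₁*u₂ + (-((a₁:ℝ)*a₂ - a₀))*u₂*u₂ + (2*(a₁:ℝ))*v₁*v₂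
        + (-((a₁:ℝ)*a₂ - a₀))*v₂*v₂ := by
    simp only [h1]; push_cast; ring
  rw [hexp]
  have t1 := abs_axy (a := 2*(a₁:ℝ)) hu1 hu2
  have t2 := abs_axy (a := -((a₁:ℝ)*a₂ - a₀)) hu2 hu2
  have t3 := abs_axy (a := 2*(a₁:ℝ)) hv1 hv2
  have t4 := abs_axy (a := -((a₁:ℝ)*a₂ - a₀)) hv2 hv2
  have h5 := abs_sum5 (-1) ((2*(a₁:ℝ))*u₁*u₂) ((-((a₁:ℝ)*a₂-a₀))*u₂*u₂)
    ((2*(a₁:ℝ))*v₁*v₂) ((-((a₁:ℝ)*a₂-a₀))*v₂*v₂)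
  have habs2 : |2*(a₁:ℝ)| = 2*|(a₁:ℝ)| := by rw [abs_mul, abs_two]
  have habsn : |(-((a₁:ℝ)*a₂-a₀))| = |(a₁:ℝ)*a₂-a₀| := abs_neg _
  rw [habs2] at t1 t3; rw [habsn] at t2 t4
  have hone : |(-1 : ℝ)| = 1 := by norm_num
  rw [hone] at h5
  have h1D : (1:ℝ) ≤ D * D := by nlinarith
  nlinarith [t1, t2, t3, t4, h5, abs_nonneg ((a₁:ℝ)), abs_nonneg ((a₁:ℝ)*a₂-a₀)]

private lemma h2_bound (a₀ a₁ a₂ u₁ u₂ v₁ v₂ : ℤ) {D : ℝ} (hD : 1 ≤ D)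
    (hu1 : |(u₁:ℝ)| ≤ D) (hu2 : |(u₂:ℝ)| ≤ D) (hv1 : |(v₁:ℝ)| ≤ D) (hv2 : |(v₂:ℝ)| ≤ D) :
    |((h2 a₀ a₁ a₂ u₁ u₂ v₁ v₂ : ℤ) : ℝ)| ≤
      (2 + 4 * |(a₂:ℝ)| + 2 * |(a₂:ℝ)^2 - a₁|) * (D * D) := by
  have hexp : ((h2 a₀ a₁ a₂ u₁ u₂ v₁ v₂ : ℤ) : ℝ) =
      (-1)*(u₁:ℝ)*u₁ + (2*(a₂:ℝ))*u₁*u₂ + (-((a₂:ℝ)^2 - a₁))*u₂*u₂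
        + (-1)*(v₁:ℝ)*v₁ + (2*(a₂:ℝ))*v₁*v₂ + (-((a₂:ℝ)^2 - a₁))*v₂*v₂ := by
    simp only [h2]; push_cast; ring
  rw [hexp]
  have t0 := abs_axy (a := (-1:ℝ)) hu1 hu1
  have t1 := abs_axy (a := 2*(a₂:ℝ)) hu1 hu2
  have t2 := abs_axy (a := -((a₂:ℝ)^2 - a₁)) hu2 hu2
  have t5 := abs_axy (a := (-1:ℝ)) hv1 hv1
  have t3 := abs_axy (a := 2*(a₂:ℝ)) hv1 hv2
  have t4 := abs_axy (a := -((a₂:ℝ)^2 - a₁)) hv2 hv2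
  have h6 := abs_sum6 ((-1)*(u₁:ℝ)*u₁) ((2*(a₂:ℝ))*u₁*u₂) ((-((a₂:ℝ)^2-a₁))*u₂*u₂)
    ((-1)*(v₁:ℝ)*v₁) ((2*(a₂:ℝ))*v₁*v₂) ((-((a₂:ℝ)^2-a₁))*v₂*v₂)
  have habs2 : |2*(a₂:ℝ)| = 2*|(a₂:ℝ)| := by rw [abs_mul, abs_two]
  have habsn : |(-((a₂:ℝ)^2-a₁))| = |(a₂:ℝ)^2-a₁| := abs_neg _
  have hone : |(-1 : ℝ)| = 1 := by norm_num
  rw [habs2] at t1 t3; rw [habsn] at t2 t4; rw [hone] at t0 t5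
  nlinarith [t0, t1, t2, t3, t4, t5, h6, abs_nonneg ((a₂:ℝ)), abs_nonneg ((a₂:ℝ)^2-a₁)]

set_option maxHeartbeats 1000000 in
theorem Sc_subset_Rtheta_one_bounded
    (a₀ a₁ a₂ : ℤ)
    (hirr : Irreducible (X ^ 3 + C a₂ * X ^ 2 + C a₁ * X + C a₀ : ℤ[X]))
    (heven : Even (a₂ ^ 2 - a₁)) (hodd : Odd (a₁ * a₂ - a₀))
    (θ : ℝ) (hroot : θ ^ 3 + (a₂ : ℝ) * θ ^ 2 + (a₁ : ℝ) * θ + (a₀ : ℝ) = 0) :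
    ∃ F : ℝ → ℝ, (∀ c : ℝ, 0 < c → 0 < F c) ∧
      Filter.Tendsto F (nhdsWithin 0 (Set.Ioi 0)) (nhds 0) ∧
      ∀ c : ℝ, 0 < c → ∃ N : ℝ, 0 < N ∧ ∀ X : ℝ, N ≤ X →
        ∀ α β uab vab : ℤ, Even α → Int.gcd α β = 1 →
          Odd uab → Odd vab → uab * α - vab * β = 1 →
          1 ≤ β → β ≤ α → (α : ℝ) ≤ c * X ^ ((1 : ℝ) / 6) →
          ∀ p ∈ Sc θ a₀ a₁ a₂ c X α β vab,
            ∃ u₀ u₁ u₂ v₀ v₁ v₂ : ℤ,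
              p.1 = (u₀ : ℝ) + (u₁ : ℝ) * θ + (u₂ : ℝ) * θ ^ 2 ∧
              p.2 = (v₀ : ℝ) + (v₁ : ℝ) * θ + (v₂ : ℝ) * θ ^ 2 ∧
              |(u₀ : ℝ)| ≤ F c * X ^ ((1 : ℝ) / 2) ∧
              |(u₁ : ℝ)| ≤ F c * X ^ ((1 : ℝ) / 2) ∧
              |(u₂ : ℝ)| ≤ F c * X ^ ((1 : ℝ) / 2) ∧
              |(v₀ : ℝ)| ≤ F c * X ^ ((1 : ℝ) / 2) ∧
              |(v₁ : ℝ)| ≤ F c * X ^ ((1 : ℝ) / 2) ∧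
              |(v₂ : ℝ)| ≤ F c * X ^ ((1 : ℝ) / 2) ∧
              ∃ n : ℤ, p.1 ^ 2 + p.2 ^ 2 = (n : ℝ) - θ := by
  set A1 : ℝ := |(a₁:ℝ)| with hA1def
  set A2 : ℝ := |(a₂:ℝ)| with hA2def
  set B1 : ℝ := |(a₁:ℝ) * a₂ - a₀| with hB1def
  set B2 : ℝ := |(a₂:ℝ)^2 - a₁| with hB2def
  set Cst : ℝ := 3 + 4*A1 + 2*B1 + 4*A2 + 2*B2 with hCstdef
  have hA1n : 0 ≤ A1 := abs_nonneg _
  have hA2n : 0 ≤ A2 := abs_nonneg _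
  have hB1n : 0 ≤ B1 := abs_nonneg _
  have hB2n : 0 ≤ B2 := abs_nonneg _
  have hC3 : (3:ℝ) ≤ Cst := by rw [hCstdef]; linarith
  refine ⟨fun c => 8 * Cst * c ^ 3, ?_, ?_, ?_⟩
  · intro c hc
    have hC0 : 0 < Cst := by linarith
    positivity
  · have h : Filter.Tendsto (fun c : ℝ => 8 * Cst * c ^ 3) (nhds 0) (nhds (8 * Cst * 0 ^ 3)) :=
      Continuous.tendsto (by continuity) 0
    have h2 := h.mono_left (nhdsWithin_le_nhds (s := Set.Ioi (0:ℝ)))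
    simpa using h2
  · intro c hc
    refine ⟨max 1 ((1/c)^6), lt_of_lt_of_le one_pos (le_max_left _ _), ?_⟩
    intro X hXN α β uab vab hαe hgcd hou hov huv hβ1 hβα hαB p hp
    obtain ⟨u₀, u₁, u₂, v₀, v₁, v₂, hp1, hp2, hev, hg, hodd1, hodd2, hI, hU, hV, hvα, huβ,
      hv1b, hmod⟩ := hp
    subst hvα; subst huβ
    have hX1 : (1:ℝ) ≤ X := le_trans (le_max_left _ _) hXN
    have hX0 : (0:ℝ) ≤ X := by linarith
    have hXc : (1/c)^6 ≤ X := le_trans (le_max_right _ _) hXN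
    set P : ℝ := X ^ ((1:ℝ)/6) with hPdef
    have hP0 : 0 ≤ P := Real.rpow_nonneg hX0 _
    have hcP : 1/c ≤ P := by
      have h6 : ((1/c)^6 : ℝ) ^ ((1:ℝ)/6) = 1/c := by
        rw [← Real.rpow_natCast (1/c) 6, ← Real.rpow_mul (by positivity)]
        norm_num
      calc 1/c = ((1/c)^6) ^ ((1:ℝ)/6) := h6.symm
        _ ≤ X ^ ((1:ℝ)/6) := Real.rpow_le_rpow (by positivity) hXc (by norm_num)
    set B : ℝ := c * P with hBdef
    have hB1 : (1:ℝ) ≤ B := by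
      have h := mul_le_mul_of_nonneg_left hcP (le_of_lt hc)
      calc (1:ℝ) = c * (1/c) := by field_simp
        _ ≤ c * P := h
    set D : ℝ := 2 * B with hDdef
    have hD1 : (1:ℝ) ≤ D := by rw [hDdef]; linarith
    have hD0 : (0:ℝ) ≤ D := by linarith
    have h1u2 : (1:ℝ) ≤ (u₂:ℝ) := by exact_mod_cast hβ1
    have hu2v2 : (u₂:ℝ) ≤ (v₂:ℝ) := by exact_mod_cast hβα
    have h1v2 : (1:ℝ) ≤ (v₂:ℝ) := le_trans h1u2 hu2v2
    have bv2 : |(v₂:ℝ)| ≤ B := by rw [abs_of_pos (by linarith)]; exact hαB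
    have bu2 : |(u₂:ℝ)| ≤ B := by
      rw [abs_of_pos (by linarith)]; exact le_trans hu2v2 hαB
    have bv1 : |(v₁:ℝ)| ≤ B := hv1b
    have bu1 : |(u₁:ℝ)| ≤ D := by
      have hIr : (u₁:ℝ) * v₂ - v₁ * u₂ = 1 := by exact_mod_cast hI
      have h2 : |(u₁:ℝ)| * v₂ = |(u₁:ℝ) * v₂| := by
        rw [abs_mul, abs_of_pos (show (0:ℝ) < (v₂:ℝ) by linarith)]
      have h3 : |(u₁:ℝ) * v₂| = |1 + (v₁:ℝ) * u₂| := by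
        rw [show (u₁:ℝ) * v₂ = 1 + (v₁:ℝ) * u₂ by linarith]
      have h4 : |1 + (v₁:ℝ) * u₂| ≤ 1 + |(v₁:ℝ)| * |(u₂:ℝ)| := by
        calc |1 + (v₁:ℝ) * u₂| ≤ |(1:ℝ)| + |(v₁:ℝ) * u₂| := abs_add_le _ _
          _ = 1 + |(v₁:ℝ)| * |(u₂:ℝ)| := by rw [abs_one, abs_mul]
      have h5 : |(v₁:ℝ)| * |(u₂:ℝ)| ≤ B * (v₂:ℝ) :=
        mul_le_mul bv1 (le_trans (le_of_eq (abs_of_pos (by linarith))) hu2v2)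
          (abs_nonneg _) (by linarith)
      have h6 : |(u₁:ℝ)| * v₂ ≤ (2*B) * v₂ := by
        calc |(u₁:ℝ)| * v₂ = |1 + (v₁:ℝ) * u₂| := by rw [h2, h3]
          _ ≤ 1 + |(v₁:ℝ)| * |(u₂:ℝ)| := h4
          _ ≤ B * v₂ + B * v₂ :=
            add_le_add (le_trans hB1 (le_mul_of_one_le_right (by linarith) h1v2)) h5
          _ = (2*B) * v₂ := by ring
      rw [hDdef]
      exact le_of_mul_le_mul_right h6 (by linarith)
    have bu2D : |(u₂:ℝ)| ≤ D := le_trans bu2 (by rw [hDdef]; linarith)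
    have bv1D : |(v₁:ℝ)| ≤ D := le_trans bv1 (by rw [hDdef]; linarith)
    have bv2D : |(v₂:ℝ)| ≤ D := le_trans bv2 (by rw [hDdef]; linarith)
    have H1b := h1_bound a₀ a₁ a₂ u₁ u₂ v₁ v₂ hD1 bu1 bu2D bv1D bv2D
    have H2b := h2_bound a₀ a₁ a₂ u₁ u₂ v₁ v₂ hD1 bu1 bu2D bv1D bv2D
    rw [← hA1def, ← hB1def] at H1b
    rw [← hA2def, ← hB2def] at H2b
    have hH1n : 0 ≤ |((h1 a₀ a₁ a₂ u₁ u₂ v₁ v₂ : ℤ) : ℝ)| := abs_nonneg _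
    have hH2n : 0 ≤ |((h2 a₀ a₁ a₂ u₁ u₂ v₁ v₂ : ℤ) : ℝ)| := abs_nonneg _
    have hUr : (2:ℝ) * (u₀:ℝ) = (v₂:ℝ) * ((h1 a₀ a₁ a₂ u₁ u₂ v₁ v₂ : ℤ) : ℝ)
        - (v₁:ℝ) * ((h2 a₀ a₁ a₂ u₁ u₂ v₁ v₂ : ℤ) : ℝ) := by exact_mod_cast hU
    have hVr : (2:ℝ) * (v₀:ℝ) = -(u₂:ℝ) * ((h1 a₀ a₁ a₂ u₁ u₂ v₁ v₂ : ℤ) : ℝ)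
        + (u₁:ℝ) * ((h2 a₀ a₁ a₂ u₁ u₂ v₁ v₂ : ℤ) : ℝ) := by exact_mod_cast hV
    have bu0 : |(u₀:ℝ)| ≤ Cst * (D * D * D) := by
      have e1 : |(2:ℝ) * (u₀:ℝ)| = 2 * |(u₀:ℝ)| := by rw [abs_mul, abs_two]
      have e2 : |(2:ℝ) * (u₀:ℝ)| ≤ |(v₂:ℝ)| * |((h1 a₀ a₁ a₂ u₁ u₂ v₁ v₂ : ℤ) : ℝ)|
          + |(v₁:ℝ)| * |((h2 a₀ a₁ a₂ u₁ u₂ v₁ v₂ : ℤ) : ℝ)| := by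
        rw [hUr]
        calc |(v₂:ℝ) * _ - (v₁:ℝ) * _| ≤ |(v₂:ℝ) * _| + |(v₁:ℝ) * _| := abs_sub _ _
          _ = _ := by rw [abs_mul, abs_mul]
      have e3 : |(v₂:ℝ)| * |((h1 a₀ a₁ a₂ u₁ u₂ v₁ v₂ : ℤ) : ℝ)| ≤
          D * ((1 + 4*A1 + 2*B1) * (D*D)) :=
        mul_le_mul bv2D H1b hH1n hD0
      have e4 : |(v₁:ℝ)| * |((h2 a₀ a₁ a₂ u₁ u₂ v₁ v₂ : ℤ) : ℝ)| ≤
          D * ((2 + 4*A2 + 2*B2) * (D*D)) :=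
        mul_le_mul bv1D H2b hH2n hD0
      have e5 : 2 * |(u₀:ℝ)| ≤ Cst * (D*D*D) := by
        rw [← e1]
        calc |(2:ℝ) * (u₀:ℝ)| ≤ _ := e2
          _ ≤ D * ((1 + 4*A1 + 2*B1) * (D*D)) + D * ((2 + 4*A2 + 2*B2) * (D*D)) :=
            add_le_add e3 e4
          _ = Cst * (D*D*D) := by rw [hCstdef]; ring
      calc |(u₀:ℝ)| ≤ 2 * |(u₀:ℝ)| := le_mul_of_one_le_left (abs_nonneg _) one_le_two
        _ ≤ Cst * (D*D*D) := e5
    have bv0 : |(v₀:ℝ)| ≤ Cst * (D * D * D) := by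
      have e1 : |(2:ℝ) * (v₀:ℝ)| = 2 * |(v₀:ℝ)| := by rw [abs_mul, abs_two]
      have e2 : |(2:ℝ) * (v₀:ℝ)| ≤ |(u₂:ℝ)| * |((h1 a₀ a₁ a₂ u₁ u₂ v₁ v₂ : ℤ) : ℝ)|
          + |(u₁:ℝ)| * |((h2 a₀ a₁ a₂ u₁ u₂ v₁ v₂ : ℤ) : ℝ)| := by
        rw [hVr]
        calc |(-(u₂:ℝ)) * _ + (u₁:ℝ) * _| ≤ |(-(u₂:ℝ)) * _| + |(u₁:ℝ) * _| := abs_add_le _ _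
          _ = _ := by rw [abs_mul, abs_mul, abs_neg]
      have e3 : |(u₂:ℝ)| * |((h1 a₀ a₁ a₂ u₁ u₂ v₁ v₂ : ℤ) : ℝ)| ≤
          D * ((1 + 4*A1 + 2*B1) * (D*D)) :=
        mul_le_mul bu2D H1b hH1n hD0
      have e4 : |(u₁:ℝ)| * |((h2 a₀ a₁ a₂ u₁ u₂ v₁ v₂ : ℤ) : ℝ)| ≤
          D * ((2 + 4*A2 + 2*B2) * (D*D)) :=
        mul_le_mul bu1 H2b hH2n hD0
      have e5 : 2 * |(v₀:ℝ)| ≤ Cst * (D*D*D) := by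
        rw [← e1]
        calc |(2:ℝ) * (v₀:ℝ)| ≤ _ := e2
          _ ≤ D * ((1 + 4*A1 + 2*B1) * (D*D)) + D * ((2 + 4*A2 + 2*B2) * (D*D)) :=
            add_le_add e3 e4
          _ = Cst * (D*D*D) := by rw [hCstdef]; ring
      calc |(v₀:ℝ)| ≤ 2 * |(v₀:ℝ)| := le_mul_of_one_le_left (abs_nonneg _) one_le_two
        _ ≤ Cst * (D*D*D) := e5
    have hP3 : P ^ (3:ℕ) = X ^ ((1:ℝ)/2) := by
      rw [hPdef, ← Real.rpow_natCast (X ^ ((1:ℝ)/6)) 3, ← Real.rpow_mul hX0]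
      norm_num
    have hkey : (8 * Cst * c ^ 3) * X ^ ((1:ℝ)/2) = Cst * (D * D * D) := by
      rw [hDdef, hBdef, ← hP3]; ring
    have hsmall : D ≤ Cst * (D * D * D) := by
      have hDD : (1:ℝ) ≤ D * D := by
        have h := mul_le_mul hD1 hD1 zero_le_one hD0
        simpa using h
      calc D ≤ D * (D * D) := le_mul_of_one_le_right hD0 hDD
        _ ≤ Cst * (D * (D * D)) :=
          le_mul_of_one_le_left (by positivity) (by linarith)
        _ = Cst * (D * D * D) := by ring
    have hBsmall : B ≤ Cst * (D * D * D) := by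
      refine le_trans ?_ hsmall
      rw [hDdef]; linarith
    refine ⟨u₀, u₁, u₂, v₀, v₁, v₂, hp1, hp2, ?_, ?_, ?_, ?_, ?_, ?_, ?_⟩
    · exact le_trans bu0 (le_of_eq hkey.symm)
    · exact le_trans (le_trans bu1 hsmall) (le_of_eq hkey.symm)
    · exact le_trans (le_trans bu2 hBsmall) (le_of_eq hkey.symm)
    · exact le_trans bv0 (le_of_eq hkey.symm)
    · exact le_trans (le_trans bv1 hBsmall) (le_of_eq hkey.symm)
    · exact le_trans (le_trans bv2 hBsmall) (le_of_eq hkey.symm)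
    · refine ⟨u₀^2 + v₀^2 + a₀*a₂*(u₂^2 + v₂^2) - 2*a₀*(u₁*u₂ + v₁*v₂), ?_⟩
      have hIr : (u₁:ℝ) * v₂ - (v₁:ℝ) * u₂ = 1 := by exact_mod_cast hI
      have hU' := hU; have hV' := hV
      simp only [h1, h2] at hU' hV'
      have hUr' := congrArg (fun z : ℤ => (z:ℝ)) hU'
      have hVr' := congrArg (fun z : ℤ => (z:ℝ)) hV'
      push_cast at hUr' hVr'
      rw [hp1, hp2]
      push_cast
      linear_combination
        ((((u₂:ℝ))^2 + ((v₂:ℝ))^2) * (θ - (a₂:ℝ)) + 2*(u₁:ℝ)*(u₂:ℝ) + 2*(v₁:ℝ)*(v₂:ℝ)) * hroot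
        + ((u₂:ℝ)*θ^2 + (u₁:ℝ)*θ) * hUr'
        + ((v₂:ℝ)*θ^2 + (v₁:ℝ)*θ) * hVr'
        + (((-(u₁:ℝ)^2) + 2*(a₂:ℝ)*(u₁:ℝ)*(u₂:ℝ) - (u₂:ℝ)^2*((a₂:ℝ)^2 - (a₁:ℝ))
            - (v₁:ℝ)^2 + 2*(a₂:ℝ)*(v₁:ℝ)*(v₂:ℝ) - (v₂:ℝ)^2*((a₂:ℝ)^2 - (a₁:ℝ))) * θ^2
            + (-1 + 2*(a₁:ℝ)*(u₁:ℝ)*(u₂:ℝ) - (u₂:ℝ)^2*((a₁:ℝ)*(a₂:ℝ) - (a₀:ℝ))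
            + 2*(a₁:ℝ)*(v₁:ℝ)*(v₂:ℝ) - (v₂:ℝ)^2*((a₁:ℝ)*(a₂:ℝ) - (a₀:ℝ))) * θ) * hIr
end

section
/- Let p(x) = x^3 + a_2 x^2 + a_1 x + a_0 ∈ ℤ[x] be irreducible with a_2^2 − a_1 even and a_1 a_2 − a_0 odd, let θ be a real root of p, and let c > 0. For all coprime integers α, β with α even and 2 ≤ α ≤ (c/4)·X^{1/6}, one has #S_c(α, β, X) ≥ c·X^{1/6} / (4α). -/
open Polynomial

theorem theta_irrational' (a₀ a₁ a₂ : ℤ)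
    (hirr : Irreducible (X ^ 3 + C a₂ * X ^ 2 + C a₁ * X + C a₀ : ℤ[X]))
    (θ : ℝ) (hroot : θ ^ 3 + (a₂ : ℝ) * θ ^ 2 + (a₁ : ℝ) * θ + (a₀ : ℝ) = 0) :
    Irrational θ := by
  set p : ℤ[X] := X ^ 3 + C a₂ * X ^ 2 + C a₁ * X + C a₀ with hp
  have hm : p.Monic := by unfold p; monicity!
  have hQ : Irreducible (p.map (Int.castRingHom ℚ)) := by
    rw [← Polynomial.IsPrimitive.Int.irreducible_iff_irreducible_map_cast hm.isPrimitive]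
    exact hirr
  have haev : Polynomial.aeval θ (p.map (Int.castRingHom ℚ)) = 0 := by
    rw [hp]
    simp only [Polynomial.map_add, Polynomial.map_mul, Polynomial.map_pow, map_X, map_C,
      map_add, map_mul, map_pow, aeval_X, aeval_C, eq_intCast, map_intCast,
      Polynomial.map_intCast]
    linarith [hroot]
  have hmq : (p.map (Int.castRingHom ℚ)).Monic := hm.map _
  have hmin : minpoly ℚ θ = p.map (Int.castRingHom ℚ) :=
    (minpoly.eq_of_irreducible_of_monic hQ haev hmq).symm
  rintro ⟨q, rfl⟩
  have h1 : (minpoly ℚ ((q : ℝ))).natDegree = 1 := by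
    have h2 : ((q : ℝ)) = algebraMap ℚ ℝ q := by norm_num
    rw [h2, minpoly.eq_X_sub_C]
    simp
  rw [hmin, hm.natDegree_map] at h1
  have hdeg : p.natDegree = 3 := by unfold p; compute_degree!
  omega

theorem even_h2' (a₀ a₁ a₂ u₁ u₂ v₁ v₂ : ℤ) (heven : Even (a₂ ^ 2 - a₁)) (hu : Odd u₁)
    (hv : Odd v₁) : Even (h2 a₀ a₁ a₂ u₁ u₂ v₁ v₂) := by
  simp [h2, parity_simps, Int.even_mul, Int.even_sub] at heven hu hv ⊢
  simp only [← Int.not_even_iff_odd] at *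
  tauto

theorem even_h1' (a₀ a₁ a₂ u₁ u₂ v₁ v₂ : ℤ) (hodd : Odd (a₁ * a₂ - a₀)) (hu₂ : Odd u₂)
    (hv₂ : Even v₂) : Even (h1 a₀ a₁ a₂ u₁ u₂ v₁ v₂) := by
  simp [h1, parity_simps, Int.even_mul, Int.odd_mul, Int.even_sub] at hodd hu₂ hv₂ ⊢
  simp only [← Int.not_even_iff_odd] at *
  tauto

theorem Sc_lower_bound
    (a₀ a₁ a₂ : ℤ)
    (hirr : Irreducible (X ^ 3 + C a₂ * X ^ 2 + C a₁ * X + C a₀ : ℤ[X]))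
    (heven : Even (a₂ ^ 2 - a₁)) (hodd : Odd (a₁ * a₂ - a₀))
    (θ : ℝ) (hroot : θ ^ 3 + (a₂ : ℝ) * θ ^ 2 + (a₁ : ℝ) * θ + (a₀ : ℝ) = 0)
    (c : ℝ) (hc : 0 < c) (X : ℝ) (α β uab vab : ℤ)
    (hαeven : Even α) (hcop : Int.gcd α β = 1)
    (huab : Odd uab) (hvab : Odd vab) (hbezout : uab * α - vab * β = 1)
    (hα2 : 2 ≤ α) (hαX : (α : ℝ) ≤ c / 4 * X ^ ((1 : ℝ) / 6)) :
    c * X ^ ((1 : ℝ) / 6) / (4 * (α : ℝ)) ≤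
      (Set.ncard (Sc θ a₀ a₁ a₂ c X α β vab) : ℝ) := by
  have hirrθ : Irrational θ := theta_irrational' a₀ a₁ a₂ hirr θ hroot
  set Y : ℝ := c * X ^ ((1 : ℝ) / 6) with hYdef
  have hαR : (2 : ℝ) ≤ (α : ℝ) := by exact_mod_cast hα2
  have hYα : 4 * (α : ℝ) ≤ Y := by rw [hYdef]; linarith
  have hα0R : (0 : ℝ) < (α : ℝ) := by linarith
  have hα0 : (α : ℤ) ≠ 0 := by omega
  have h2α : (0 : ℝ) < 2 * (α : ℝ) := by linarith
  -- β is odd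
  have hβodd : Odd β := by
    rcases Int.even_or_odd β with hβ | hβ
    · exfalso
      have hd : (2 : ℤ) ∣ (Int.gcd α β : ℤ) := Int.dvd_coe_gcd hαeven.two_dvd hβ.two_dvd
      rw [hcop] at hd
      norm_num at hd
    · exact hβ
  -- the integers v₁, u₁ for parameter k
  set V : ℤ → ℤ := fun k => vab + 2 * α * k with hV
  set U : ℤ → ℤ := fun k => uab + 2 * β * k with hU
  have hOddV : ∀ k, Odd (V k) := fun k => hvab.add_even ⟨α * k, by ring⟩
  have hOddU : ∀ k, Odd (U k) := fun k => huab.add_even ⟨β * k, by ring⟩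
  have hIk : ∀ k, U k * α - V k * β = 1 := by
    intro k; simp only [hU, hV]; linear_combination hbezout
  -- numerators
  set N₁ : ℤ → ℤ := fun k =>
    α * h1 a₀ a₁ a₂ (U k) β (V k) α - V k * h2 a₀ a₁ a₂ (U k) β (V k) α with hN₁
  set N₂ : ℤ → ℤ := fun k =>
    -β * h1 a₀ a₁ a₂ (U k) β (V k) α + U k * h2 a₀ a₁ a₂ (U k) β (V k) α with hN₂
  have hEh1 : ∀ k, Even (h1 a₀ a₁ a₂ (U k) β (V k) α) :=
    fun k => even_h1' a₀ a₁ a₂ (U k) β (V k) α hodd hβodd hαeven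
  have hEh2 : ∀ k, Even (h2 a₀ a₁ a₂ (U k) β (V k) α) :=
    fun k => even_h2' a₀ a₁ a₂ (U k) β (V k) α heven (hOddU k) (hOddV k)
  have hEN₁ : ∀ k, Even (N₁ k) := fun k =>
    (hαeven.mul_right _).sub ((hEh2 k).mul_left _)
  have hEN₂ : ∀ k, Even (N₂ k) := fun k =>
    (((hEh1 k).mul_left _)).add ((hEh2 k).mul_left _)
  have hdiv1 : ∀ k, 2 * (N₁ k / 2) = N₁ k := fun k => Int.two_mul_ediv_two_of_even (hEN₁ k)
  have hdiv2 : ∀ k, 2 * (N₂ k / 2) = N₂ k := fun k => Int.two_mul_ediv_two_of_even (hEN₂ k)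
  -- the injection
  set f : ℤ → ℝ × ℝ := fun k =>
    (((N₁ k / 2 : ℤ) : ℝ) + ((U k : ℤ) : ℝ) * θ + (β : ℝ) * θ ^ 2,
     ((N₂ k / 2 : ℤ) : ℝ) + ((V k : ℤ) : ℝ) * θ + (α : ℝ) * θ ^ 2) with hf
  set K₁ : ℤ := ⌈(-Y - (vab : ℝ)) / (2 * (α : ℝ))⌉ with hK₁def
  set K₂ : ℤ := ⌊(Y - (vab : ℝ)) / (2 * (α : ℝ))⌋ with hK₂def
  set T : Finset ℤ := Finset.Icc K₁ K₂ with hT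
  -- each f k lies in Sc
  have hmem : ∀ k ∈ T, f k ∈ Sc θ a₀ a₁ a₂ c X α β vab := by
    intro k hk
    rw [hT, Finset.mem_Icc] at hk
    have hbd : |((V k : ℤ) : ℝ)| ≤ Y := by
      have hk1 : ((K₁ : ℤ) : ℝ) ≤ k := by exact_mod_cast hk.1
      have hk2 : ((k : ℤ) : ℝ) ≤ K₂ := by exact_mod_cast hk.2
      have hu : ((k : ℤ) : ℝ) ≤ (Y - (vab : ℝ)) / (2 * (α : ℝ)) :=
        le_trans hk2 (Int.floor_le _)
      have hl : (-Y - (vab : ℝ)) / (2 * (α : ℝ)) ≤ ((k : ℤ) : ℝ) :=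
        le_trans (Int.le_ceil _) hk1
      have hu' : ((k : ℤ) : ℝ) * (2 * (α : ℝ)) ≤ Y - (vab : ℝ) := (le_div_iff₀ h2α).mp hu
      have hl' : -Y - (vab : ℝ) ≤ ((k : ℤ) : ℝ) * (2 * (α : ℝ)) := (div_le_iff₀ h2α).mp hl
      rw [abs_le]
      constructor
      · simp only [hV]; push_cast; nlinarith
      · simp only [hV]; push_cast; nlinarith
    exact ⟨N₁ k / 2, U k, β, N₂ k / 2, V k, α, rfl, rfl, hαeven,
      by rw [Int.gcd_comm]; exact hcop, hOddU k, hOddV k, hIk k,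
      hdiv1 k, hdiv2 k, rfl, rfl, hbd, ⟨k, by simp only [hV]; ring⟩⟩
  -- injectivity
  have hinj : Set.InjOn f ↑T := by
    intro k _ k' _ heq
    by_contra hne
    have hVne : V k ≠ V k' := by
      simp only [hV]
      intro h
      apply hne
      have : (2 * α) * k = (2 * α) * k' := by linarith
      exact mul_left_cancel₀ (by omega) this
    have hsnd := congrArg Prod.snd heq
    simp only [hf] at hsnd
    have hθ : θ * (((V k : ℤ) : ℝ) - ((V k' : ℤ) : ℝ)) =
        ((N₂ k' / 2 : ℤ) : ℝ) - ((N₂ k / 2 : ℤ) : ℝ) := by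
      have := hsnd
      nlinarith [this]
    have hden : (((V k - V k' : ℤ) : ℝ)) ≠ 0 := by
      intro h
      apply hVne
      have : (V k - V k' : ℤ) = 0 := by exact_mod_cast h
      omega
    apply hirrθ
    refine ⟨((N₂ k' / 2 - N₂ k / 2 : ℤ) : ℚ) / ((V k - V k' : ℤ) : ℚ), ?_⟩
    rw [Rat.cast_div]
    push_cast
    rw [div_eq_iff (by push_cast at hden ⊢; exact hden)]
    push_cast at hθ
    linarith [hθ]
  -- finiteness via a covering map
  set g : ℤ → ℝ × ℝ := fun w =>
    ((((α * h1 a₀ a₁ a₂ ((1 + w * β) / α) β w α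
        - w * h2 a₀ a₁ a₂ ((1 + w * β) / α) β w α) / 2 : ℤ) : ℝ)
        + (((1 + w * β) / α : ℤ) : ℝ) * θ + (β : ℝ) * θ ^ 2,
      (((-β * h1 a₀ a₁ a₂ ((1 + w * β) / α) β w α
        + ((1 + w * β) / α) * h2 a₀ a₁ a₂ ((1 + w * β) / α) β w α) / 2 : ℤ) : ℝ)
        + (w : ℝ) * θ + (α : ℝ) * θ ^ 2) with hg
  have hfin : (Sc θ a₀ a₁ a₂ c X α β vab).Finite := by
    apply Set.Finite.subset ((Set.finite_Icc (⌈-Y⌉ : ℤ) ⌊Y⌋).image g)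
    rintro ⟨x, y⟩ ⟨u₀, u₁, u₂, v₀, v₁, v₂, hx, hy, _, _, _, _, hI, hu0, hv0, hv₂, hu₂, hbd, _⟩
    rw [hv₂] at hy hI hu0 hv0
    rw [hu₂] at hx hI hu0 hv0
    refine ⟨v₁, ?_, ?_⟩
    · rw [Set.mem_Icc]
      rw [abs_le] at hbd
      constructor
      · exact Int.ceil_le.mpr (by exact_mod_cast hbd.1)
      · exact Int.le_floor.mpr (by exact_mod_cast hbd.2)
    · have hu1 : (1 + v₁ * β) / α = u₁ := by
        have h : 1 + v₁ * β = u₁ * α := by linarith [hI]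
        rw [h, Int.mul_ediv_cancel _ hα0]
      have hu0' : (α * h1 a₀ a₁ a₂ u₁ β v₁ α - v₁ * h2 a₀ a₁ a₂ u₁ β v₁ α) / 2 = u₀ := by
        rw [← hu0, Int.mul_ediv_cancel_left _ (by norm_num)]
      have hv0' : (-β * h1 a₀ a₁ a₂ u₁ β v₁ α + u₁ * h2 a₀ a₁ a₂ u₁ β v₁ α) / 2 = v₀ := by
        rw [← hv0, Int.mul_ediv_cancel_left _ (by norm_num)]
      simp only [hg, hu1, hu0', hv0']
      exact Prod.ext hx.symm hy.symm
  -- cardinality bounds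
  have himg : (T.card : ℝ) ≤ ((Sc θ a₀ a₁ a₂ c X α β vab).ncard : ℝ) := by
    have h1 : (f '' ↑T).ncard = T.card := by
      rw [Set.ncard_image_of_injOn hinj, Set.ncard_coe_finset]
    have h2 : (f '' ↑T).ncard ≤ (Sc θ a₀ a₁ a₂ c X α β vab).ncard := by
      apply Set.ncard_le_ncard _ hfin
      rintro p ⟨k, hk, rfl⟩
      exact hmem k hk
    exact_mod_cast h1 ▸ h2
  -- counting the interval
  have hcount : Y / (4 * (α : ℝ)) ≤ (T.card : ℝ) := by
    have hK2 : (Y - (vab : ℝ)) / (2 * (α : ℝ)) - 1 < (K₂ : ℝ) := Int.sub_one_lt_floor _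
    have hK1 : (K₁ : ℝ) < (-Y - (vab : ℝ)) / (2 * (α : ℝ)) + 1 := Int.ceil_lt_add_one _
    have e1 : (Y - (vab : ℝ)) / (2 * (α : ℝ)) * (2 * (α : ℝ)) = Y - (vab : ℝ) :=
      div_mul_cancel₀ _ (ne_of_gt h2α)
    have e2 : (-Y - (vab : ℝ)) / (2 * (α : ℝ)) * (2 * (α : ℝ)) = -Y - (vab : ℝ) :=
      div_mul_cancel₀ _ (ne_of_gt h2α)
    have f1 : Y - (vab : ℝ) - 2 * (α : ℝ) < (K₂ : ℝ) * (2 * (α : ℝ)) := by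
      have h := mul_lt_mul_of_pos_right hK2 h2α
      have e3 : ((Y - (vab : ℝ)) / (2 * (α : ℝ)) - 1) * (2 * (α : ℝ))
          = Y - (vab : ℝ) - 2 * (α : ℝ) := by rw [sub_mul, e1]; ring
      linarith
    have f2 : (K₁ : ℝ) * (2 * (α : ℝ)) < -Y - (vab : ℝ) + 2 * (α : ℝ) := by
      have h := mul_lt_mul_of_pos_right hK1 h2α
      have e3 : ((-Y - (vab : ℝ)) / (2 * (α : ℝ)) + 1) * (2 * (α : ℝ))
          = -Y - (vab : ℝ) + 2 * (α : ℝ) := by rw [add_mul, e2]; ring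
      linarith
    have hcard : ((K₂ + 1 - K₁ : ℤ) : ℝ) ≤ (T.card : ℝ) := by
      rw [hT, Int.card_Icc]
      exact_mod_cast Int.self_le_toNat _
    have hZ : Y / (4 * (α : ℝ)) ≤ ((K₂ + 1 - K₁ : ℤ) : ℝ) := by
      rw [div_le_iff₀ (by linarith)]
      push_cast
      have expand : ((K₂ : ℝ) + 1 - (K₁ : ℝ)) * (4 * (α : ℝ))
          = 2 * ((K₂ : ℝ) * (2 * (α : ℝ))) + 2 * (2 * (α : ℝ))
            - 2 * ((K₁ : ℝ) * (2 * (α : ℝ))) := by ring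
      linarith
    linarith
  calc Y / (4 * (α : ℝ)) ≤ (T.card : ℝ) := hcount
    _ ≤ _ := himg
end
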